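/- arXiv:2012.06093 — 2 statements merged into one kernel-verified Lean document; each statement's English description precedes it below -/
import Mathlib

section
/- Adjusted conditional mean recovers the marginal potential-outcome mean: with the adjusted outcome Ycf ω := Yobs ω − Σ_{l ∈ J, l ≠ A ω} p(l)·c(A ω, l), one has E[Ycf | A = j] = E[Y j] for every treatment j ∈ J. -/
open MeasureTheory ProbabilityTheory

noncomputable section

variable {Ω J : Type*}

/-- `condMean μ A Z j` is `E[Z | A = j]`, the mean of `Z` under the conditional
measure `μ[|{A = j}]`. -/
def condMean [MeasurableSpace Ω] (μ : Measure Ω) (A : Ω → J) (Z : Ω → ℝ) (j : J) : ℝ :=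
  ∫ ω, Z ω ∂(μ[|{ω | A ω = j}])

/-- `treatProb μ A j` is `p(j) = μ{ω : A ω = j}`. -/
def treatProb [MeasurableSpace Ω] (μ : Measure Ω) (A : Ω → J) (j : J) : ℝ :=
  (μ {ω | A ω = j}).toReal

/-- The confounding function `c(j,k) = E[Y j | A = j] - E[Y j | A = k]`. -/
def confFun [MeasurableSpace Ω] (μ : Measure Ω) (A : Ω → J) (Y : J → Ω → ℝ) (j k : J) : ℝ :=
  condMean μ A (Y j) j - condMean μ A (Y j) k

/-- The confounding-function-adjusted outcome
`Ycf ω = Yobs ω - ∑_{l ≠ A ω} p(l) · c(A ω, l)`. -/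
def adjOutcome [MeasurableSpace Ω] [Fintype J] [DecidableEq J]
    (μ : Measure Ω) (A : Ω → J) (Y : J → Ω → ℝ) (ω : Ω) : ℝ :=
  Y (A ω) ω -
    ∑ l ∈ Finset.univ.filter (fun l => l ≠ A ω), treatProb μ A l * confFun μ A Y (A ω) l

/-! Write `m l = E[Y j | A = l]`. On `{A = j}` the adjustment is the constant
`∑_{l ≠ j} p(l) (m j - m l) = m j - ∑_l p(l) m l`, since the term `l = j` vanishes and
`∑_l p(l) = 1`. Hence `E[Ycf | A = j] = ∑_l p(l) m l`, which is `E[Y j]` by the law of total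
expectation. -/

theorem MeasureTheory.Integrable.cond {Ω : Type*} [MeasurableSpace Ω] {μ : Measure Ω} {f : Ω → ℝ}
    (hf : Integrable f μ) (s : Set Ω) : Integrable f μ[|s] := by
  rcases eq_or_ne (μ s) 0 with hs | hs
  · simp [cond_eq_zero_of_meas_eq_zero hs]
  · exact hf.restrict.smul_measure (ENNReal.inv_ne_top.2 hs)

section CondMean

variable {Ω J : Type*} [MeasurableSpace Ω] {μ : Measure Ω} {A : Ω → J}

theorem condMean_congr [MeasurableSpace J] [MeasurableSingletonClass J] (hA : Measurable A)
    {Z W : Ω → ℝ} {j : J} (h : ∀ ω, A ω = j → Z ω = W ω) :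
    condMean μ A Z j = condMean μ A W j :=
  integral_congr_ae <| ae_cond_of_forall_mem (hA (measurableSet_singleton j)) h

theorem condMean_sub_const [IsFiniteMeasure μ] {Z : Ω → ℝ} (hZ : Integrable Z μ) {j : J}
    (hj : 0 < treatProb μ A j) (c : ℝ) :
    condMean μ A (fun ω => Z ω - c) j = condMean μ A Z j - c := by
  have : IsProbabilityMeasure μ[|{ω | A ω = j}] :=
    cond_isProbabilityMeasure (ENNReal.toReal_pos_iff.1 hj).1.ne'
  simp only [condMean]
  rw [integral_sub (hZ.cond _) (integrable_const c), integral_const, probReal_univ, one_smul]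

variable [Fintype J] [MeasurableSpace J] [MeasurableSingletonClass J]

theorem sum_treatProb [IsProbabilityMeasure μ] (hA : Measurable A) :
    ∑ l, treatProb μ A l = 1 := by
  change ∑ l, (μ (A ⁻¹' {l})).toReal = 1
  rw [← ENNReal.toReal_sum fun l _ => measure_ne_top μ _,
    sum_measure_preimage_singleton _ fun l _ => hA (measurableSet_singleton l)]
  simp

theorem integral_eq_sum_treatProb_mul_condMean [IsFiniteMeasure μ] (hA : Measurable A)
    {Z : Ω → ℝ} (hZ : Integrable Z μ) :
    ∫ ω, Z ω ∂μ = ∑ l, treatProb μ A l * condMean μ A Z l := by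
  conv_lhs => rw [← sum_meas_smul_cond_fiber hA μ]
  rw [integral_finsetSum_measure fun l _ => (hZ.cond _).smul_measure (measure_ne_top μ _)]
  simp [treatProb, condMean, Set.preimage, smul_eq_mul]

theorem condMean_adjOutcome [IsFiniteMeasure μ] [DecidableEq J] (hA : Measurable A)
    {Y : J → Ω → ℝ} {j : J} (hY : Integrable (Y j) μ) (hj : 0 < treatProb μ A j) :
    condMean μ A (adjOutcome μ A Y) j = condMean μ A (Y j) j -
      ∑ l ∈ Finset.univ.filter (fun l => l ≠ j), treatProb μ A l * confFun μ A Y j l := by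
  rw [← condMean_sub_const hY hj]
  exact condMean_congr hA fun ω hω => by simp only [adjOutcome, hω]

end CondMean

theorem adjusted_condMean_eq_marginal_mean_general
    [MeasurableSpace Ω] (μ : Measure Ω) [IsProbabilityMeasure μ]
    [Fintype J] [DecidableEq J] [MeasurableSpace J] [MeasurableSingletonClass J]
    (A : Ω → J) (hA : Measurable A)
    (Y : J → Ω → ℝ) (hY : ∀ j, Integrable (Y j) μ)
    (hp : ∀ j, 0 < treatProb μ A j)
    (j : J) :
    condMean μ A (adjOutcome μ A Y) j = ∫ ω, Y j ω ∂μ := by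
  have hsum : ∑ l ∈ Finset.univ.filter (fun l => l ≠ j), treatProb μ A l * confFun μ A Y j l =
      ∑ l, treatProb μ A l * confFun μ A Y j l :=
    Finset.sum_filter_of_ne fun l _ hl => by rintro rfl; simp [confFun] at hl
  rw [condMean_adjOutcome hA (hY j) (hp j), hsum, integral_eq_sum_treatProb_mul_condMean hA (hY j)]
  simp only [confFun, mul_sub, Finset.sum_sub_distrib, ← Finset.sum_mul, sum_treatProb hA]
  ring

theorem adjusted_condMean_eq_marginal_mean
    [MeasurableSpace Ω] (μ : Measure Ω) [IsProbabilityMeasure μ]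
    [Fintype J] [Nonempty J] [DecidableEq J] [MeasurableSpace J] [MeasurableSingletonClass J]
    (A : Ω → J) (hA : Measurable A)
    (Y : J → Ω → ℝ) (hY : ∀ j, Integrable (Y j) μ)
    (hp : ∀ j, 0 < treatProb μ A j)
    (j : J) :
    condMean μ A (adjOutcome μ A Y) j = ∫ ω, Y j ω ∂μ :=
  adjusted_condMean_eq_marginal_mean_general μ A hA Y hY hp j

end
end

section
/- Three-treatment special case of the bias formula: if J = {1, 2, 3} consists of exactly three distinct treatments, then for the pair (1, 2), (E[Yobs | A = 1] − E[Yobs | A = 2]) − E[Y 1 − Y 2] = −p(1)·c(2, 1) + p(2)·c(1, 2) − p(3)·(c(2, 3) − c(1, 3)), so that the bias for a pairwise effect depends on the confounding functions involving the third treatment as well. -/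
open MeasureTheory ProbabilityTheory

noncomputable section

variable {Ω J : Type*}

lemma condMean_eq_inv_mul [MeasurableSpace Ω] (μ : Measure Ω) (A : Ω → J) (Z : Ω → ℝ) (j : J) :
    condMean μ A Z j = (μ {ω | A ω = j}).toReal⁻¹ * ∫ ω in {ω | A ω = j}, Z ω ∂μ := by
  rw [condMean, ProbabilityTheory.cond, integral_smul_measure, ENNReal.toReal_inv, smul_eq_mul]

lemma treatProb_mul_condMean [MeasurableSpace Ω] (μ : Measure Ω)
    (A : Ω → J) (Z : Ω → ℝ) (j : J) (hpj : 0 < treatProb μ A j) :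
    treatProb μ A j * condMean μ A Z j = ∫ ω in {ω | A ω = j}, Z ω ∂μ := by
  have hne : (μ {ω | A ω = j}).toReal ≠ 0 := ne_of_gt hpj
  rw [condMean_eq_inv_mul, ← mul_assoc, treatProb, mul_inv_cancel₀ hne, one_mul]

lemma condMean_obs [MeasurableSpace Ω] [MeasurableSpace J] [MeasurableSingletonClass J]
    (μ : Measure Ω) (A : Ω → J) (hA : Measurable A) (Y : J → Ω → ℝ) (j : J) :
    condMean μ A (fun ω => Y (A ω) ω) j = condMean μ A (Y j) j := by
  unfold condMean
  refine integral_congr_ae ?_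
  rw [ProbabilityTheory.cond]
  apply Measure.ae_smul_measure
  filter_upwards [ae_restrict_mem (hA (measurableSet_singleton j))] with ω hω
  rw [show A ω = j from hω]

theorem bias_formula_three_treatments
    [MeasurableSpace Ω] (μ : Measure Ω) [IsProbabilityMeasure μ]
    [Fintype J] [Nonempty J] [DecidableEq J] [MeasurableSpace J] [MeasurableSingletonClass J]
    (A : Ω → J) (hA : Measurable A)
    (Y : J → Ω → ℝ) (hY : ∀ j, Integrable (Y j) μ)
    (hp : ∀ j, 0 < treatProb μ A j)
    (t1 t2 t3 : J) (h12 : t1 ≠ t2) (h13 : t1 ≠ t3) (h23 : t2 ≠ t3)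
    (hall : ∀ l : J, l = t1 ∨ l = t2 ∨ l = t3) :
    (condMean μ A (fun ω => Y (A ω) ω) t1 - condMean μ A (fun ω => Y (A ω) ω) t2)
        - ∫ ω, (Y t1 ω - Y t2 ω) ∂μ
      = -(treatProb μ A t1) * confFun μ A Y t2 t1 + treatProb μ A t2 * confFun μ A Y t1 t2
        - treatProb μ A t3 * (confFun μ A Y t2 t3 - confFun μ A Y t1 t3) := by
  set s : J → Set Ω := fun j => {ω | A ω = j} with hs
  have hms : ∀ j, MeasurableSet (s j) := fun j => hA (measurableSet_singleton j)
  have hdisj : ∀ j k : J, j ≠ k → Disjoint (s j) (s k) := by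
    intro j k hjk
    rw [Set.disjoint_left]
    intro ω h1 h2
    exact hjk (h1.symm.trans h2)
  have huniv : s t1 ∪ s t2 ∪ s t3 = Set.univ := by
    ext ω
    simp only [Set.mem_union, Set.mem_setOf_eq, Set.mem_univ, iff_true, hs]
    rcases hall (A ω) with h | h | h <;> tauto
  have hdisj12 : Disjoint (s t1) (s t2) := hdisj _ _ h12
  have hdisj123 : Disjoint (s t1 ∪ s t2) (s t3) :=
    Set.disjoint_union_left.mpr ⟨hdisj _ _ h13, hdisj _ _ h23⟩
  -- total expectation
  have htot : ∀ Z : Ω → ℝ, Integrable Z μ →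
      ∫ ω, Z ω ∂μ = (∫ ω in s t1, Z ω ∂μ) + (∫ ω in s t2, Z ω ∂μ) + (∫ ω in s t3, Z ω ∂μ) := by
    intro Z hZ
    rw [← setIntegral_univ, ← huniv,
      setIntegral_union hdisj123 (hms t3) ((hZ.integrableOn).mono_set (Set.subset_univ _))
        ((hZ.integrableOn).mono_set (Set.subset_univ _)),
      setIntegral_union hdisj12 (hms t2) ((hZ.integrableOn).mono_set (Set.subset_univ _))
        ((hZ.integrableOn).mono_set (Set.subset_univ _))]
  have hpsum : treatProb μ A t1 + treatProb μ A t2 + treatProb μ A t3 = 1 := by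
    have h1 : μ (s t1) + μ (s t2) + μ (s t3) = 1 := by
      rw [← measure_union hdisj12 (hms t2), ← measure_union hdisj123 (hms t3), huniv,
        measure_univ]
    have h2 := congrArg ENNReal.toReal h1
    rw [ENNReal.toReal_add (by finiteness) (by finiteness),
      ENNReal.toReal_add (by finiteness) (by finiteness)] at h2
    simpa [treatProb, hs] using h2
  rw [condMean_obs μ A hA Y t1, condMean_obs μ A hA Y t2, integral_sub (hY t1) (hY t2),
    htot (Y t1) (hY t1), htot (Y t2) (hY t2)]
  have hR : ∀ j k : J, (∫ ω in s j, Y k ω ∂μ) = treatProb μ A j * condMean μ A (Y k) j :=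
    fun j k => (treatProb_mul_condMean μ A (Y k) j (hp j)).symm
  rw [hR t1 t1, hR t2 t1, hR t3 t1, hR t1 t2, hR t2 t2, hR t3 t2]
  unfold confFun
  linear_combination (condMean μ A (Y t2) t2 - condMean μ A (Y t1) t1) * hpsum

end
end
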